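/- arXiv:2201.12110 — 2 statements merged into one kernel-verified Lean document; each statement's English description precedes it below -/
import Mathlib

section
/- Let A and B be operators on a finite-dimensional Hilbert space with 0 ≤ A ≤ I and B ≥ 0, and let c > 0 be a real number. Then I − (A+B)^{−1/2} A (A+B)^{−1/2} ≤ (1+c)(I − A) + (2 + c + c^{−1}) B, where the inverse square root is taken on the support of A+B. -/
open Matrix BigOperators
open scoped ComplexOrder

/-- `R` is the Moore–Penrose pseudo-inverse square root of the positive operator `S`:
`R` is positive semidefinite and `R * R` is the Moore–Penrose pseudo-inverse of `S`. -/
def IsPinvSqrt {n : Type*} [Fintype n] [DecidableEq n] (S R : Matrix n n ℂ) : Prop :=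
  R.PosSemidef ∧ S * (R * R) * S = S ∧ (R * R) * S * (R * R) = R * R ∧
    (S * (R * R))ᴴ = S * (R * R) ∧ ((R * R) * S)ᴴ = (R * R) * S

/-!
Write `S = A + B`, `Π = R S R` (the projection onto the support of `S`) and `D = R - 1`. Then
`R A R = Π - R B R`, and expanding `R B R = (1 + D) B (1 + D)` with the operator Young inequality
`X* B Y + Y* B X ≤ c X* B X + c⁻¹ Y* B Y` gives `R B R ≤ (1 + c⁻¹) B + (1 + c) D B D`. Next
`D B D ≤ D S D = Π - 2 R S + S`, where `R S = √S ≥ √A ≥ A` by operator monotonicity of the square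
root and `0 ≤ A ≤ 1`. Together with `Π ≤ 1` this yields the inequality.
-/

section StarOrderedAlgebra

variable {A : Type*} [Ring A] [StarRing A] [PartialOrder A] [StarOrderedRing A]
  [Algebra ℝ A] [StarModule ℝ A]

theorem star_add_mul_mul_add_le {b : A} (hb : 0 ≤ b) (x y : A) {c : ℝ} (hc : 0 < c) :
    star (x + y) * b * (x + y) ≤ (1 + c) • (star x * b * x) + (1 + c⁻¹) • (star y * b * y) := by
  obtain ⟨t, ht, rfl⟩ : ∃ t : ℝ, 0 < t ∧ c = t ^ 2 :=
    ⟨√c, Real.sqrt_pos.mpr hc, (Real.sq_sqrt hc.le).symm⟩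
  -- The difference of the two sides is `star z * b * z` with `z = t • x - t⁻¹ • y`.
  rw [← sub_nonneg]
  convert star_left_conjugate_nonneg hb (t • x - t⁻¹ • y) using 1
  simp only [star_add, star_sub, star_smul, star_trivial, add_mul, mul_add, sub_mul, mul_sub,
    smul_mul_assoc, mul_smul_comm]
  match_scalars <;> field_simp <;> ring

theorem one_sub_conjugate_le {a b r : A} (ha : 0 ≤ a) (hb : 0 ≤ b) (hr : IsSelfAdjoint r)
    (hcomm : Commute r (a + b)) (hproj : r * (a + b) * r ≤ 1) (hsqrt : a ≤ r * (a + b))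
    {c : ℝ} (hc : 0 < c) :
    1 - r * a * r ≤ (1 + c) • (1 - a) + (2 + c + c⁻¹) • b := by
  set s := a + b with hs
  have hrar : r * a * r = r * s * r - r * b * r := by rw [hs]; noncomm_ring
  have hyoung : r * b * r ≤ (1 + c) • ((r - 1) * b * (r - 1)) + (1 + c⁻¹) • b := by
    simpa [hr.star_eq] using star_add_mul_mul_add_le hb (r - 1) 1 hc
  have hbs : (r - 1) * b * (r - 1) ≤ (r - 1) * s * (r - 1) :=
    (hr.sub (.one A)).conjugate_le_conjugate (le_add_of_nonneg_left ha)
  have hexpand : (r - 1) * s * (r - 1) = r * s * r - 2 • (r * s) + s := by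
    calc (r - 1) * s * (r - 1) = r * s * r - r * s - s * r + s := by noncomm_ring
      _ = r * s * r - 2 • (r * s) + s := by rw [← hcomm.eq, two_smul]; abel
  calc 1 - r * a * r = (1 - r * s * r) + r * b * r := by rw [hrar]; abel
    _ ≤ (1 - r * s * r) + ((1 + c) • ((r - 1) * s * (r - 1)) + (1 + c⁻¹) • b) := by
      gcongr
      exact hyoung.trans (by gcongr)
    _ = (1 + c) • (1 - a) + (2 + c + c⁻¹) • b - c • (1 - r * s * r)
        - (2 + 2 * c) • (r * s - a) := by rw [hexpand, hs]; module
    _ ≤ (1 + c) • (1 - a) + (2 + c + c⁻¹) • b :=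
      (sub_le_self _ (smul_nonneg (by positivity) (sub_nonneg.2 hsqrt))).trans
        (sub_le_self _ (smul_nonneg hc.le (sub_nonneg.2 hproj)))

end StarOrderedAlgebra

section CStarAlgebra

variable {A : Type*} [CStarAlgebra A] [PartialOrder A] [StarOrderedRing A]

theorem Commute.of_mul_self_right {a r : A} (hr : 0 ≤ r) (h : Commute a (r * r)) :
    Commute a r := by
  rw [← CFC.sqrt_mul_self r, CFC.sqrt_eq_cfc]
  exact (h.symm.cfc_nnreal _).symm

theorem CFC.le_sqrt_of_le {a b : A} (ha₀ : 0 ≤ a) (ha₁ : a ≤ 1) (hab : a ≤ b) : a ≤ sqrt b :=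
  calc a = sqrt a ^ 2 := (sq_sqrt a).symm
    _ ≤ sqrt a ^ 1 := by
      refine CStarAlgebra.pow_antitone (sqrt_nonneg a) ?_ one_le_two
      simpa [sqrt_one] using sqrt_le_sqrt a 1 ha₁
    _ ≤ sqrt b := by simpa using sqrt_le_sqrt a b hab

end CStarAlgebra

open scoped MatrixOrder Matrix.Norms.L2Operator

namespace IsPinvSqrt

variable {n : Type*} [Fintype n] [DecidableEq n] {S R : Matrix n n ℂ}

theorem commute (h : IsPinvSqrt S R) (hS : S.IsHermitian) : Commute R S := by
  obtain ⟨hR, -, -, -, hsym⟩ := h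
  have hRR : Commute S (R * R) := by
    rwa [conjTranspose_mul, conjTranspose_mul, hR.isHermitian.eq, hS.eq] at hsym
  exact (hRR.of_mul_self_right hR.nonneg).symm

theorem isStarProjection (h : IsPinvSqrt S R) (hS : S.IsHermitian) :
    IsStarProjection (R * S * R) where
  isIdempotentElem := by
    calc R * S * R * (R * S * R) = R * (S * (R * R) * S) * R := by noncomm_ring
      _ = R * S * R := by rw [h.2.1]
  isSelfAdjoint := by
    rw [IsSelfAdjoint, star_eq_conjTranspose, conjTranspose_mul, conjTranspose_mul,
      h.1.isHermitian.eq, hS.eq, mul_assoc]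

theorem mul_eq_sqrt (h : IsPinvSqrt S R) (hS : S.PosSemidef) : R * S = CFC.sqrt S := by
  have hcomm := h.commute hS.isHermitian
  refine (CFC.sqrt_unique ?_ (hcomm.mul_nonneg h.1.nonneg hS.nonneg)).symm
  calc R * S * (R * S) = R * (R * S) * S := by
        rw [mul_assoc R S, ← mul_assoc S, ← hcomm.eq]
        simp only [mul_assoc]
    _ = S * (R * R) * S := by rw [← mul_assoc, (hcomm.mul_left hcomm).eq]
    _ = S := h.2.1

end IsPinvSqrt

/-- **Hayashi–Nagaoka inequality.**  For operators `0 ≤ A ≤ I`, `B ≥ 0` and any real `c > 0`,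
`I − (A+B)^{-1/2} A (A+B)^{-1/2} ≤ (1+c)(I − A) + (2 + c + c⁻¹) B` in the Loewner order,
where the inverse square root is taken on the support of `A + B`. -/
theorem hayashi_nagaoka {n : Type*} [Fintype n] [DecidableEq n]
    (A B R : Matrix n n ℂ) (hA : A.PosSemidef) (hA1 : ((1 : Matrix n n ℂ) - A).PosSemidef)
    (hB : B.PosSemidef) (c : ℝ) (hc : 0 < c) (hR : IsPinvSqrt (A + B) R) :
    (((1 + c : ℝ) • ((1 : Matrix n n ℂ) - A) + ((2 + c + c⁻¹ : ℝ)) • B)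
      - ((1 : Matrix n n ℂ) - R * A * R)).PosSemidef := by
  have hS : (A + B).PosSemidef := hA.add hB
  have hsqrt : A ≤ R * (A + B) := by
    rw [hR.mul_eq_sqrt hS]
    exact CFC.le_sqrt_of_le hA.nonneg (Matrix.le_iff.2 hA1) (le_add_of_nonneg_right hB.nonneg)
  exact one_sub_conjugate_le hA.nonneg hB.nonneg hR.1.nonneg.isSelfAdjoint
    (hR.commute hS.isHermitian) (hR.isStarProjection hS.isHermitian).le_one hsqrt hc
end

section
/- For density operators ρ, σ on a finite-dimensional Hilbert space with supp(ρ) ⊆ supp(σ), and 0 ≤ ε < 1, the hypothesis-testing relative entropy satisfies D_h^ε(ρ‖σ) ≤ (S(ρ‖σ) + H_b(ε))/(1 − ε), where S(ρ‖σ) is the quantum relative entropy in bits and H_b(ε) = −ε log₂ ε − (1−ε) log₂(1−ε) is the binary entropy (with H_b(0) := 0). -/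
/-!
Diagonalise `ρ = ∑ aᵢ uᵢuᵢ*` and `σ = ∑ bⱼ vⱼvⱼ*` and put `cᵢⱼ = |⟨uᵢ, vⱼ⟩|²`. The
Nussbaum–Szkoła distributions `Pᵢⱼ = aᵢcᵢⱼ` and `Rᵢⱼ = bⱼcᵢⱼ` have classical relative entropy
`S(ρ‖σ)` (in nats). For a test `0 ≤ Q ≤ 1` with `p = tr Qρ`, `q = tr Qσ`, the data-processing
inequality `D((p, 1-p)‖(q, 1-q)) ≤ D(P‖R)` follows from `log x = ∫₀^∞ 1/(1+t) - 1/(x+t) dt`: it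
suffices to compare, for every `t > 0`, the divergences `∑ R²/(P + tR)` of the operator convex
functions `x ↦ 1/(x+t)`, and for the binary pair that comparison is a Cauchy–Schwarz inequality
for the operator `T = μQ + ν(1 - Q)`. Finally `p·(-log q) ≤ S(ρ‖σ) + h(p)`, and since
`h(x)/(1-x)` is increasing, `p ≥ 1 - ε` gives `-log q ≤ (S(ρ‖σ) + h(ε))/(1 - ε)`.
-/

open Matrix BigOperators
open scoped ComplexOrder

/-- The function `f` applied spectrally to a Hermitian matrix `A` via its eigendecomposition. -/
noncomputable def matFun {n : Type*} [Fintype n] [DecidableEq n] {A : Matrix n n ℂ}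
    (hA : A.IsHermitian) (f : ℝ → ℝ) : Matrix n n ℂ :=
  (hA.eigenvectorUnitary : Matrix n n ℂ) *
    Matrix.diagonal (fun i => (f (hA.eigenvalues i) : ℂ)) *
      star (hA.eigenvectorUnitary : Matrix n n ℂ)

/-- The hypothesis-testing relative entropy `D_h^ε(ρ‖σ)`. -/
noncomputable def Dh {n : Type*} [Fintype n] [DecidableEq n] (ε : ℝ)
    (ρ σ : Matrix n n ℂ) : ℝ :=
  sSup {x : ℝ | ∃ Q : Matrix n n ℂ, Q.PosSemidef ∧ ((1 : Matrix n n ℂ) - Q).PosSemidef ∧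
    1 - ε ≤ ((Q * ρ).trace).re ∧ x = Real.logb 2 (1 / ((Q * σ).trace).re)}

open Finset Real Filter Topology

section Classical

variable {ι κ : Type*} [Fintype ι] [Fintype κ]

structure IsProbPair (P R : ι → ℝ) : Prop where
  nonneg_left : ∀ k, 0 ≤ P k
  nonneg_right : ∀ k, 0 ≤ R k
  sum_left : ∑ k, P k = 1
  sum_right : ∑ k, R k = 1
  absCont : ∀ k, R k = 0 → P k = 0

/-- Relative entropy in nats; thanks to `log 0 = 0` it is the right value whenever `P ≪ R`. -/
noncomputable def relEntropy (P R : ι → ℝ) : ℝ := ∑ k, P k * (log (P k) - log (R k))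

/-- The `f`-divergence `∑ R f(P/R)` of the operator convex function `f x = 1/(x+t)`. -/
noncomputable def resolventDivergence (t : ℝ) (P R : ι → ℝ) : ℝ :=
  ∑ k, R k ^ 2 / (P k + t * R k)

noncomputable def relEntropyInterp (t : ℝ) (P R : ι → ℝ) : ℝ :=
  ∑ k, P k * (log (P k + t * R k) - log (R k + t * R k))

lemma relEntropyInterp_zero (P R : ι → ℝ) : relEntropyInterp 0 P R = relEntropy P R := by
  simp [relEntropyInterp, relEntropy]

lemma pos_of_absCont {a b : ℝ} (hb : 0 ≤ b) (hab : b = 0 → a = 0) (ha : a ≠ 0) : 0 < b :=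
  hb.lt_of_ne fun h => ha (hab h.symm)

lemma hasDerivAt_mul_log_add_sub {a b t : ℝ} (ha : 0 ≤ a) (hb : 0 ≤ b) (hab : b = 0 → a = 0)
    (ht : 0 ≤ t) :
    HasDerivAt (fun s => a * (log (a + s * b) - log (b + s * b)))
      (a * b / (a + t * b) - a / (1 + t)) t := by
  rcases ha.eq_or_lt with rfl | ha
  · simpa using hasDerivAt_const t (0 : ℝ)
  have hb : 0 < b := pos_of_absCont hb hab ha.ne'
  have hlin (c : ℝ) : HasDerivAt (fun s => c + s * b) b t := by
    simpa using ((hasDerivAt_id t).mul_const b).const_add c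
  refine ((((hlin a).log (by positivity)).sub ((hlin b).log (by positivity))).const_mul a
    ).congr_deriv ?_
  have : b + t * b ≠ 0 := by positivity
  field_simp

lemma tendsto_mul_log_add_sub {a b : ℝ} (ha : 0 ≤ a) (hb : 0 ≤ b) (hab : b = 0 → a = 0) :
    Tendsto (fun s => a * (log (a + s * b) - log (b + s * b))) atTop (𝓝 0) := by
  rcases ha.eq_or_lt with rfl | ha
  · simp
  have hb : 0 < b := pos_of_absCont hb hab ha.ne'
  have hratio : Tendsto (fun s => (a + s * b) / (b + s * b)) atTop (𝓝 1) := by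
    have hden : Tendsto (fun s => b + s * b) atTop atTop :=
      tendsto_atTop_add_const_left _ _ (tendsto_id.atTop_mul_const hb)
    have := (tendsto_const_nhds (x := (a - b))).div_atTop hden
    refine (this.const_add 1).congr' ?_ |>.trans (by simp)
    filter_upwards [eventually_gt_atTop 0] with s hs
    field_simp
    ring
  have := ((continuousAt_log one_ne_zero).tendsto.comp hratio).const_mul a
  simp only [log_one, mul_zero] at this
  refine this.congr' ?_
  filter_upwards [eventually_gt_atTop 0] with s hs
  simp only [Function.comp_apply]
  rw [log_div (by positivity) (by positivity)]

lemma mul_div_add_mul_eq {a b t : ℝ} (ha : 0 ≤ a) (hb : 0 ≤ b) (ht : 0 < t) :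
    a * b / (a + t * b) = b - t * (b ^ 2 / (a + t * b)) := by
  rcases (add_nonneg ha (mul_nonneg ht.le hb)).eq_or_lt with h | h
  · have : b = 0 := by nlinarith
    simp [this]
  · rw [mul_div_assoc', eq_sub_iff_add_eq, ← add_div, div_eq_iff h.ne']
    ring

namespace IsProbPair

variable {P R : ι → ℝ} (h : IsProbPair P R)
include h

lemma hasDerivAt_relEntropyInterp {t : ℝ} (ht : 0 < t) :
    HasDerivAt (relEntropyInterp · P R) (t * (1 / (1 + t) - resolventDivergence t P R)) t := by
  have hterm k := hasDerivAt_mul_log_add_sub (h.nonneg_left k) (h.nonneg_right k) (h.absCont k)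
    ht.le
  refine (HasDerivAt.fun_sum (u := univ) fun k _ => hterm k).congr_deriv ?_
  simp only [sum_sub_distrib, ← sum_div, h.sum_left, resolventDivergence,
    mul_div_add_mul_eq (h.nonneg_left _) (h.nonneg_right _) ht, ← mul_sum, h.sum_right]
  field_simp
  ring

lemma continuousOn_relEntropyInterp : ContinuousOn (relEntropyInterp · P R) (Set.Ici 0) :=
  fun _ ht => HasDerivAt.continuousAt (HasDerivAt.fun_sum (u := univ) fun k _ =>
    hasDerivAt_mul_log_add_sub (h.nonneg_left k) (h.nonneg_right k) (h.absCont k) ht)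
    |>.continuousWithinAt

lemma tendsto_relEntropyInterp : Tendsto (relEntropyInterp · P R) atTop (𝓝 0) := by
  simpa [relEntropyInterp] using tendsto_finsetSum univ fun k _ =>
    tendsto_mul_log_add_sub (h.nonneg_left k) (h.nonneg_right k) (h.absCont k)

end IsProbPair

theorem relEntropy_le_of_resolventDivergence_le {P R : ι → ℝ} {P' R' : κ → ℝ}
    (h : IsProbPair P R) (h' : IsProbPair P' R')
    (hres : ∀ t > 0, resolventDivergence t P' R' ≤ resolventDivergence t P R) :
    relEntropy P' R' ≤ relEntropy P R := by
  set g := fun t => relEntropyInterp t P R - relEntropyInterp t P' R'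
  have hderiv {t} (ht : 0 < t) : HasDerivAt g
      (t * (resolventDivergence t P' R' - resolventDivergence t P R)) t :=
    ((h.hasDerivAt_relEntropyInterp ht).sub (h'.hasDerivAt_relEntropyInterp ht)).congr_deriv
      (by ring)
  have hanti : AntitoneOn g (Set.Ici 0) := by
    refine antitoneOn_of_deriv_nonpos (convex_Ici 0)
      (h.continuousOn_relEntropyInterp.sub h'.continuousOn_relEntropyInterp) ?_ ?_ <;>
      rw [interior_Ici] <;> intro t (ht : 0 < t)
    · exact (hderiv ht).differentiableAt.differentiableWithinAt
    · rw [(hderiv ht).deriv]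
      exact mul_nonpos_of_nonneg_of_nonpos ht.le (sub_nonpos.mpr (hres t ht))
  have hlim : Tendsto g atTop (𝓝 0) := by
    simpa using h.tendsto_relEntropyInterp.sub h'.tendsto_relEntropyInterp
  have : 0 ≤ g 0 := le_of_tendsto hlim <| by
    filter_upwards [eventually_ge_atTop (0 : ℝ)] with t ht
    exact hanti Set.self_mem_Ici ht ht
  simpa [g, relEntropyInterp_zero, sub_nonneg] using this

def binary (p : ℝ) : Fin 2 → ℝ := ![p, 1 - p]

lemma isProbPair_binary {p q : ℝ} (hp0 : 0 ≤ p) (hp1 : p ≤ 1) (hq0 : 0 ≤ q) (hq1 : q ≤ 1)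
    (h0 : q = 0 → p = 0) (h1 : q = 1 → p = 1) : IsProbPair (binary p) (binary q) where
  nonneg_left := by simp [Fin.forall_fin_two, binary, hp0, hp1]
  nonneg_right := by simp [Fin.forall_fin_two, binary, hq0, hq1]
  sum_left := by simp [binary]
  sum_right := by simp [binary]
  absCont := by
    simpa [Fin.forall_fin_two, binary, sub_eq_zero, eq_comm (a := (1 : ℝ))] using And.intro h0 h1

lemma relEntropy_binary (p q : ℝ) : relEntropy (binary p) (binary q) =
    p * (log p - log q) + (1 - p) * (log (1 - p) - log (1 - q)) := by
  simp [relEntropy, binary]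

lemma resolventDivergence_binary (t p q : ℝ) : resolventDivergence t (binary p) (binary q) =
    q ^ 2 / (p + t * q) + (1 - q) ^ 2 / ((1 - p) + t * (1 - q)) := by
  simp [resolventDivergence, binary]

lemma monotoneOn_binEntropy_div_one_sub :
    MonotoneOn (fun x => binEntropy x / (1 - x)) (Set.Ico 0 1) := by
  have hderiv {x : ℝ} (hx : x ∈ Set.Ioo 0 1) :
      HasDerivAt (fun x => binEntropy x / (1 - x)) (-log x / (1 - x) ^ 2) x := by
    have h1x : 1 - x ≠ 0 := by linarith [hx.2]
    refine ((hasDerivAt_binEntropy hx.1.ne' (by linarith [hx.2])).div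
      ((hasDerivAt_id x).const_sub 1) h1x).congr_deriv ?_
    simp only [binEntropy, log_inv, id]
    field_simp
    ring
  refine monotoneOn_of_deriv_nonneg (convex_Ico 0 1) ?_ ?_ ?_
  · exact binEntropy_continuous.continuousOn.div (continuousOn_const.sub continuousOn_id)
      fun x hx => by linarith [hx.2]
  · rw [interior_Ico]
    exact fun x hx => (hderiv hx).differentiableAt.differentiableWithinAt
  · rw [interior_Ico]
    intro x hx
    rw [(hderiv hx).deriv]
    exact div_nonneg (neg_nonneg.mpr (log_nonpos hx.1.le hx.2.le)) (sq_nonneg _)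

lemma neg_log_le_of_relEntropy_binary_le {D p q ε : ℝ} (hD : 0 ≤ D)
    (hpq : IsProbPair (binary p) (binary q)) (hεp : 1 - ε ≤ p) (hε0 : 0 ≤ ε) (hε1 : ε < 1)
    (h : relEntropy (binary p) (binary q) ≤ D) :
    -log q ≤ (D + binEntropy ε) / (1 - ε) := by
  have hε : 0 < 1 - ε := by linarith
  have hp : 0 < p := by linarith
  have hp1 : p ≤ 1 := by simpa [binary] using hpq.nonneg_left 1
  have hq1 : q ≤ 1 := by simpa [binary] using hpq.nonneg_right 1
  have hq : 0 < q := by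
    refine (by simpa [binary] using hpq.nonneg_right 0 : 0 ≤ q).lt_of_ne fun hq0 => ?_
    have := hpq.absCont 0 (by simp [binary, ← hq0])
    simp only [binary, Matrix.cons_val_zero] at this
    linarith
  have hkey : p * -log q ≤ D + binEntropy p := by
    have : (1 - p) * log (1 - q) ≤ 0 :=
      mul_nonpos_of_nonneg_of_nonpos (by linarith) (log_nonpos (by linarith) (by linarith))
    rw [relEntropy_binary] at h
    simp only [binEntropy, log_inv]
    linarith
  have hentropy : binEntropy p / p ≤ binEntropy ε / (1 - ε) := by
    simpa using monotoneOn_binEntropy_div_one_sub ⟨by linarith, by linarith⟩ ⟨hε0, hε1⟩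
      (by linarith : 1 - p ≤ ε)
  calc -log q ≤ D / p + binEntropy p / p := by
        rw [← add_div, le_div_iff₀ hp]
        linarith
    _ ≤ D / (1 - ε) + binEntropy ε / (1 - ε) :=
        add_le_add (div_le_div_of_nonneg_left hD hε hεp) hentropy
    _ = (D + binEntropy ε) / (1 - ε) := (add_div _ _ _).symm

end Classical

lemma sq_norm_sum_le_weighted {κ : Type*} [Fintype κ] (w b : κ → ℝ) (x y : κ → ℂ)
    (hw : ∀ k, 0 ≤ w k) (hb : ∀ k, 0 ≤ b k) (hwb : ∀ k, w k = 0 → b k = 0) :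
    ‖∑ k, b k * (star (x k) * y k)‖ ^ 2 ≤
      (∑ k, w k * Complex.normSq (x k)) * ∑ k, b k ^ 2 * Complex.normSq (y k) / w k := by
  have hnorm : ‖∑ k, b k * (star (x k) * y k)‖ ≤ ∑ k, b k * ‖x k‖ * ‖y k‖ := by
    refine (norm_sum_le _ _).trans_eq (sum_congr rfl fun k _ => ?_)
    simp [abs_of_nonneg (hb k), mul_assoc]
  refine (pow_le_pow_left₀ (norm_nonneg _) hnorm 2).trans <|
    sum_sq_le_sum_mul_sum_of_sq_le_mul _ (fun k _ => mul_nonneg (hw k) (Complex.normSq_nonneg _))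
      (fun k _ => div_nonneg (mul_nonneg (sq_nonneg _) (Complex.normSq_nonneg _)) (hw k))
      fun k _ => ?_
  rcases (hw k).eq_or_lt with h | h
  · simp [hwb k h.symm]
  · rw [Complex.normSq_eq_norm_sq, Complex.normSq_eq_norm_sq]
    field_simp
    exact le_rfl

section Spectral

variable {n : Type*} [Fintype n] [DecidableEq n] {A B : Matrix n n ℂ}

lemma trace_diagonal_mul (d : n → ℂ) (M : Matrix n n ℂ) :
    (diagonal d * M).trace = ∑ i, d i * M i i := by
  simp [trace, diagonal_mul]

lemma trace_mul_eq_sum_eigenvalues (hA : A.IsHermitian) (X : Matrix n n ℂ) :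
    (A * X).trace = ∑ i, (hA.eigenvalues i : ℂ) *
      (star (hA.eigenvectorUnitary : Matrix n n ℂ) * X * hA.eigenvectorUnitary) i i := by
  set U : Matrix n n ℂ := (hA.eigenvectorUnitary : Matrix n n ℂ)
  conv_lhs => rw [hA.spectral_theorem, Unitary.conjStarAlgAut_apply]
  set D : Matrix n n ℂ := diagonal (RCLike.ofReal ∘ hA.eigenvalues)
  rw [show U * D * star U * X = U * (D * (star U * X)) by simp only [mul_assoc], trace_mul_comm,
    mul_assoc D, trace_diagonal_mul]
  rfl

lemma mul_diagonal_mul_star_apply_self (M : Matrix n n ℂ) (d : n → ℝ) (i : n) :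
    (M * diagonal (fun j => (d j : ℂ)) * star M) i i =
      ((∑ j, d j * Complex.normSq (M i j) : ℝ) : ℂ) := by
  push_cast
  refine sum_congr rfl fun j _ => ?_
  simp [mul_right_comm _ _ ((starRingEnd ℂ) _), Complex.mul_conj, mul_comm]

lemma mul_star_apply_self (M : Matrix n n ℂ) (i : n) :
    (M * star M) i i = ((∑ j, Complex.normSq (M i j) : ℝ) : ℂ) := by
  simpa using mul_diagonal_mul_star_apply_self M 1 i

lemma star_mul_apply_self (M : Matrix n n ℂ) (j : n) :
    (star M * M) j j = ((∑ i, Complex.normSq (M i j) : ℝ) : ℂ) := by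
  simpa [Complex.normSq_conj] using mul_star_apply_self (star M) j

noncomputable def eigenOverlap (hA : A.IsHermitian) (hB : B.IsHermitian) (i j : n) : ℝ :=
  Complex.normSq ((star (hA.eigenvectorUnitary : Matrix n n ℂ) * hB.eigenvectorUnitary) i j)

lemma eigenOverlap_comm (hA : A.IsHermitian) (hB : B.IsHermitian) (i j : n) :
    eigenOverlap hB hA j i = eigenOverlap hA hB i j := by
  rw [eigenOverlap, eigenOverlap, ← star_star (hA.eigenvectorUnitary : Matrix n n ℂ), ← star_mul,
    star_star, star_apply, Complex.star_def, Complex.normSq_conj]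

lemma sum_eigenOverlap_right (hA : A.IsHermitian) (hB : B.IsHermitian) (i : n) :
    ∑ j, eigenOverlap hA hB i j = 1 := by
  have h := mul_star_apply_self
    (star (hA.eigenvectorUnitary : Matrix n n ℂ) * (hB.eigenvectorUnitary : Matrix n n ℂ)) i
  rw [star_mul, star_star, mul_assoc, ← mul_assoc (hB.eigenvectorUnitary : Matrix n n ℂ),
    Unitary.mul_star_self_of_mem hB.eigenvectorUnitary.2, one_mul,
    Unitary.star_mul_self_of_mem hA.eigenvectorUnitary.2, one_apply_eq] at h
  exact_mod_cast h.symm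

lemma eigenOverlap_self (hA : A.IsHermitian) (i j : n) :
    eigenOverlap hA hA i j = if i = j then 1 else 0 := by
  simp [eigenOverlap, one_apply, apply_ite]

lemma trace_mul_conj_diagonal (hA : A.IsHermitian) (hB : B.IsHermitian) (d : n → ℝ) :
    (A * ((hB.eigenvectorUnitary : Matrix n n ℂ) * diagonal (fun j => (d j : ℂ)) *
      star (hB.eigenvectorUnitary : Matrix n n ℂ))).trace =
      ((∑ i, ∑ j, hA.eigenvalues i * eigenOverlap hA hB i j * d j : ℝ) : ℂ) := by
  rw [trace_mul_eq_sum_eigenvalues hA]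
  have h (i : n) := mul_diagonal_mul_star_apply_self
    (star (hA.eigenvectorUnitary : Matrix n n ℂ) * (hB.eigenvectorUnitary : Matrix n n ℂ)) d i
  simp only [star_mul, star_star, ← mul_assoc] at h
  simp only [← mul_assoc, h, eigenOverlap]
  push_cast
  simp [mul_sum, mul_comm, mul_left_comm]

lemma trace_mul_matFun (hA : A.IsHermitian) (hB : B.IsHermitian) (f : ℝ → ℝ) :
    (A * matFun hB f).trace =
      ((∑ i, ∑ j, hA.eigenvalues i * eigenOverlap hA hB i j * f (hB.eigenvalues j) : ℝ) : ℂ) :=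
  trace_mul_conj_diagonal hA hB (f ∘ hB.eigenvalues)

lemma trace_mul_matFun_self (hA : A.IsHermitian) (f : ℝ → ℝ) :
    (A * matFun hA f).trace = ((∑ i, hA.eigenvalues i * f (hA.eigenvalues i) : ℝ) : ℂ) := by
  rw [trace_mul_matFun hA hA]
  simp [eigenOverlap_self]

lemma Matrix.PosSemidef.re_trace_mul_nonneg (hA : A.PosSemidef) (hB : B.PosSemidef) :
    0 ≤ (A * B).trace.re := by
  open scoped MatrixOrder in
  obtain ⟨C, rfl⟩ := CStarAlgebra.nonneg_iff_eq_star_mul_self.mp hB.nonneg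
  rw [← mul_assoc, trace_mul_comm, ← mul_assoc]
  exact (Complex.le_def.mp (hA.mul_mul_conjTranspose_same C).trace_nonneg).1

lemma re_trace_mul_eq_zero_of_ker_le {ρ σ X : Matrix n n ℂ} (hσ : σ.PosSemidef)
    (hsupp : ∀ v : n → ℂ, σ *ᵥ v = 0 → ρ *ᵥ v = 0) (hX : X.PosSemidef)
    (h : (X * σ).trace.re = 0) : (X * ρ).trace.re = 0 := by
  open scoped MatrixOrder in
  obtain ⟨C, rfl⟩ := CStarAlgebra.nonneg_iff_eq_star_mul_self.mp hX.nonneg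
  have hCσC := hσ.mul_mul_conjTranspose_same C
  have hzero : C * σ * Cᴴ = 0 := by
    rw [← hCσC.trace_eq_zero_iff]
    refine Complex.ext ?_ (Complex.le_def.mp hCσC.trace_nonneg).2.symm
    rwa [trace_mul_cycle, ← star_eq_conjTranspose]
  have hρC : ρ * star C = 0 := by
    refine ext_iff_mulVec.mpr fun v => ?_
    rw [← mulVec_mulVec, zero_mulVec]
    refine hsupp _ ((hσ.dotProduct_mulVec_zero_iff _).mp ?_)
    rw [star_mulVec, ← dotProduct_mulVec, mulVec_mulVec, mulVec_mulVec, star_eq_conjTranspose,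
      conjTranspose_conjTranspose, hzero, zero_mulVec, dotProduct_zero]
  rw [mul_assoc, trace_mul_comm, mul_assoc, hρC, mul_zero, trace_zero, Complex.zero_re]

/-- The Nussbaum–Szkoła distribution `(i, j) ↦ aᵢ |⟨uᵢ, vⱼ⟩|²` built from the eigen-decompositions
`A = ∑ aᵢ uᵢuᵢ*` and `B = ∑ bⱼ vⱼvⱼ*`. -/
noncomputable def nussbaumSzkola (hA : A.IsHermitian) (hB : B.IsHermitian) (k : n × n) : ℝ :=
  hA.eigenvalues k.1 * eigenOverlap hA hB k.1 k.2

lemma sum_nussbaumSzkola (hA : A.IsHermitian) (hB : B.IsHermitian) :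
    ∑ k, nussbaumSzkola hA hB k = A.trace.re := by
  simp [Fintype.sum_prod_type, nussbaumSzkola, ← mul_sum, sum_eigenOverlap_right,
    hA.trace_eq_sum_eigenvalues]

lemma nussbaumSzkola_nonneg (hA : A.PosSemidef) (hB : B.IsHermitian) (k : n × n) :
    0 ≤ nussbaumSzkola hA.1 hB k :=
  mul_nonneg (hA.eigenvalues_nonneg _) (Complex.normSq_nonneg _)

lemma nussbaumSzkola_swap (hA : A.IsHermitian) (hB : B.IsHermitian) (k : n × n) :
    nussbaumSzkola hB hA k.swap = hB.eigenvalues k.2 * eigenOverlap hA hB k.1 k.2 := by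
  simp [nussbaumSzkola, eigenOverlap_comm]

lemma nussbaumSzkola_eq_zero_of_swap {ρ σ : Matrix n n ℂ} (hρ : ρ.PosSemidef)
    (hσ : σ.PosSemidef) (hsupp : ∀ v : n → ℂ, σ *ᵥ v = 0 → ρ *ᵥ v = 0) (k : n × n)
    (h : nussbaumSzkola hσ.1 hρ.1 k.swap = 0) : nussbaumSzkola hρ.1 hσ.1 k = 0 := by
  obtain ⟨i, j⟩ := k
  rw [nussbaumSzkola_swap] at h
  rcases mul_eq_zero.mp h with hb | hc
  · set V : Matrix n n ℂ := (hσ.1.eigenvectorUnitary : Matrix n n ℂ)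
    have hX : (V * diagonal (fun l => ((Pi.single j 1 : n → ℝ) l : ℂ)) * star V).PosSemidef := by
      rw [star_eq_conjTranspose]
      refine (posSemidef_diagonal_iff.mpr fun l => ?_).mul_mul_conjTranspose_same V
      by_cases hl : l = j <;> simp [hl]
    have hzero := re_trace_mul_eq_zero_of_ker_le hσ hsupp hX (by
      rw [trace_mul_comm, trace_mul_conj_diagonal hσ.1 hσ.1]
      simp [eigenOverlap_self, Pi.single_apply, hb])
    rw [trace_mul_comm, trace_mul_conj_diagonal hρ.1 hσ.1] at hzero
    simp only [Pi.single_apply, mul_ite, mul_one, mul_zero, sum_ite_eq', mem_univ, if_true,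
      Complex.ofReal_re] at hzero
    exact (sum_eq_zero_iff_of_nonneg fun i _ => mul_nonneg (hρ.eigenvalues_nonneg i)
      (Complex.normSq_nonneg _)).mp hzero i (mem_univ i)
  · simp [nussbaumSzkola, hc]

lemma isProbPair_nussbaumSzkola {ρ σ : Matrix n n ℂ} (hρ : ρ.PosSemidef) (hρtr : ρ.trace = 1)
    (hσ : σ.PosSemidef) (hσtr : σ.trace = 1) (hsupp : ∀ v : n → ℂ, σ *ᵥ v = 0 → ρ *ᵥ v = 0) :
    IsProbPair (nussbaumSzkola hρ.1 hσ.1) (nussbaumSzkola hσ.1 hρ.1 ∘ Prod.swap) where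
  nonneg_left := nussbaumSzkola_nonneg hρ hσ.1
  nonneg_right _ := nussbaumSzkola_nonneg hσ hρ.1 _
  sum_left := by rw [sum_nussbaumSzkola, hρtr, Complex.one_re]
  sum_right := by
    rw [← (Equiv.prodComm n n).sum_comp] at *
    simp [sum_nussbaumSzkola, hσtr]
  absCont := nussbaumSzkola_eq_zero_of_swap hρ hσ hsupp

lemma relEntropy_nussbaumSzkola {ρ σ : Matrix n n ℂ} (hρ : ρ.IsHermitian) (hσ : σ.IsHermitian)
    (hac : ∀ k, nussbaumSzkola hσ hρ k.swap = 0 → nussbaumSzkola hρ hσ k = 0) :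
    relEntropy (nussbaumSzkola hρ hσ) (nussbaumSzkola hσ hρ ∘ Prod.swap) =
      log 2 * (ρ * (matFun hρ (logb 2) - matFun hσ (logb 2))).trace.re := by
  have hterm (i j : n) : nussbaumSzkola hρ hσ (i, j) *
      (log (nussbaumSzkola hρ hσ (i, j)) - log (nussbaumSzkola hσ hρ (i, j).swap)) =
      hρ.eigenvalues i * eigenOverlap hρ hσ i j *
        (log (hρ.eigenvalues i) - log (hσ.eigenvalues j)) := by
    have hac' := hac (i, j)
    rw [nussbaumSzkola_swap] at hac' ⊢
    simp only [nussbaumSzkola] at hac' ⊢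
    by_cases hP : hρ.eigenvalues i * eigenOverlap hρ hσ i j = 0
    · rw [hP, zero_mul, zero_mul]
    obtain ⟨ha, hc⟩ := mul_ne_zero_iff.mp hP
    have hb := left_ne_zero_of_mul (mt hac' hP)
    rw [log_mul ha hc, log_mul hb hc]
    ring
  have hlog2 : log 2 ≠ 0 := by positivity
  rw [relEntropy, Fintype.sum_prod_type]
  simp only [Function.comp_apply, hterm, mul_sub, sum_sub_distrib, ← sum_mul, ← mul_sum,
    sum_eigenOverlap_right, mul_one, trace_sub, trace_mul_matFun_self, trace_mul_matFun hρ hσ,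
    Complex.sub_re, Complex.ofReal_re, logb, mul_div_assoc', ← sum_div]
  field_simp

lemma div_sq_add_mul_eq {a b c t : ℝ} (hc : c ≠ 0) :
    (b * c) ^ 2 / (a * c + t * (b * c)) = b ^ 2 * c / (a + t * b) := by
  rw [show a * c + t * (b * c) = (a + t * b) * c by ring, show (b * c) ^ 2 = b ^ 2 * c * c by ring,
    mul_div_mul_right _ _ hc]

lemma resolventDivergence_nussbaumSzkola (hA : A.IsHermitian) (hB : B.IsHermitian) (t : ℝ) :
    resolventDivergence t (nussbaumSzkola hA hB) (nussbaumSzkola hB hA ∘ Prod.swap) =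
      ∑ k : n × n, hB.eigenvalues k.2 ^ 2 * eigenOverlap hA hB k.1 k.2 /
        (hA.eigenvalues k.1 + t * hB.eigenvalues k.2) := by
  refine sum_congr rfl fun ⟨i, j⟩ _ => ?_
  rw [Function.comp_apply, nussbaumSzkola_swap, nussbaumSzkola]
  rcases eq_or_ne (eigenOverlap hA hB i j) 0 with hc | hc
  · simp [hc]
  · exact div_sq_add_mul_eq hc

lemma sq_norm_trace_mul_le {ρ σ : Matrix n n ℂ} (hρ : ρ.PosSemidef) (hσ : σ.PosSemidef)
    {T : Matrix n n ℂ} (hT : T.IsHermitian) {t : ℝ} (ht : 0 < t) :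
    ‖(T * σ).trace‖ ^ 2 ≤ (T * T * (ρ + t • σ)).trace.re *
      resolventDivergence t (nussbaumSzkola hρ.1 hσ.1) (nussbaumSzkola hσ.1 hρ.1 ∘ Prod.swap) := by
  set U : Matrix n n ℂ := (hρ.1.eigenvectorUnitary : Matrix n n ℂ)
  set V : Matrix n n ℂ := (hσ.1.eigenvectorUnitary : Matrix n n ℂ)
  have hU : U * star U = 1 := Unitary.mul_star_self_of_mem hρ.1.eigenvectorUnitary.2
  have hV : V * star V = 1 := Unitary.mul_star_self_of_mem hσ.1.eigenvectorUnitary.2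
  set S := star U * T * V
  have hS : star S = star V * T * U := by
    simp only [S, star_mul, star_eq_conjTranspose, hT.eq, conjTranspose_conjTranspose, mul_assoc]
  have hσT : star V * T * V = star S * (star U * V) := by
    simp only [hS, mul_assoc]
    rw [← mul_assoc U, hU, one_mul]
  have hρTT : star U * (T * T) * U = S * star S := by
    rw [hS]
    simp only [S, mul_assoc]
    rw [← mul_assoc V, hV, one_mul]
  have hσTT : star V * (T * T) * V = star S * S := by
    rw [hS]
    simp only [S, mul_assoc]
    rw [← mul_assoc U, hU, one_mul]
  have hlin : (T * σ).trace = ∑ k : n × n,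
      (hσ.1.eigenvalues k.2 : ℂ) * (star (S k.1 k.2) * (star U * V) k.1 k.2) := by
    rw [trace_mul_comm, trace_mul_eq_sum_eigenvalues hσ.1, hσT, Fintype.sum_prod_type_right]
    simp only [mul_apply, mul_sum, star_apply]
  have hquad : (T * T * (ρ + t • σ)).trace = ((∑ k : n × n,
      (hρ.1.eigenvalues k.1 + t * hσ.1.eigenvalues k.2) * Complex.normSq (S k.1 k.2) : ℝ) : ℂ) := by
    rw [mul_add, trace_add, mul_smul_comm, trace_smul, trace_mul_comm,
      trace_mul_eq_sum_eigenvalues hρ.1, hρTT, trace_mul_comm (T * T),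
      trace_mul_eq_sum_eigenvalues hσ.1, hσTT, Fintype.sum_prod_type]
    simp only [mul_star_apply_self, star_mul_apply_self, add_mul, sum_add_distrib]
    push_cast
    congr 1
    · simp only [mul_sum]
    · rw [Complex.real_smul, sum_comm]
      simp only [mul_sum, mul_assoc]
  rw [hlin, hquad, Complex.ofReal_re, resolventDivergence_nussbaumSzkola]
  refine sq_norm_sum_le_weighted _ _ _ _ (fun k => ?_) (fun k => hσ.eigenvalues_nonneg _)
    fun k hk => ?_
  · have := hρ.eigenvalues_nonneg k.1
    have := hσ.eigenvalues_nonneg k.2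
    positivity
  · have := hρ.eigenvalues_nonneg k.1
    have := hσ.eigenvalues_nonneg k.2
    nlinarith

lemma re_trace_smul_add_smul_one_sub_mul (Q M : Matrix n n ℂ) (c d : ℝ) :
    ((c • Q + d • (1 - Q)) * M).trace.re =
      c * (Q * M).trace.re + d * (M.trace.re - (Q * M).trace.re) := by
  simp [add_mul, sub_mul, trace_add, trace_sub, trace_smul]

lemma posSemidef_mul_one_sub {Q : Matrix n n ℂ} (hQ : Q.PosSemidef) (hQ1 : (1 - Q).PosSemidef) :
    (Q * (1 - Q)).PosSemidef := by
  open scoped MatrixOrder in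
  exact (Commute.mul_nonneg hQ.nonneg hQ1.nonneg
    ((Commute.one_right Q).sub_right (Commute.refl Q))).posSemidef

lemma re_trace_sq_mul_le {Q M : Matrix n n ℂ} (hQ : Q.PosSemidef) (hQ1 : (1 - Q).PosSemidef)
    (hM : M.PosSemidef) (μ ν : ℝ) :
    ((μ • Q + ν • (1 - Q)) * (μ • Q + ν • (1 - Q)) * M).trace.re ≤
      μ ^ 2 * (Q * M).trace.re + ν ^ 2 * (M.trace.re - (Q * M).trace.re) := by
  have hgap : (μ ^ 2 • Q + ν ^ 2 • (1 - Q)) - (μ • Q + ν • (1 - Q)) * (μ • Q + ν • (1 - Q)) =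
      (μ - ν) ^ 2 • (Q * (1 - Q)) := by
    simp only [add_mul, mul_add, smul_mul_smul, mul_sub, sub_mul, mul_one, one_mul]
    module
  have := ((posSemidef_mul_one_sub hQ hQ1).smul (sq_nonneg (μ - ν))).re_trace_mul_nonneg hM
  rwa [← hgap, sub_mul, trace_sub, Complex.sub_re, sub_nonneg,
    re_trace_smul_add_smul_one_sub_mul] at this

lemma div_sq_mul_self (x d : ℝ) : (x / d) ^ 2 * d = x / d * x := by
  rcases eq_or_ne d 0 with rfl | hd
  · simp
  · field_simp

theorem resolventDivergence_binary_trace_le {ρ σ Q : Matrix n n ℂ} (hρ : ρ.PosSemidef)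
    (hρtr : ρ.trace = 1) (hσ : σ.PosSemidef) (hσtr : σ.trace = 1) (hQ : Q.PosSemidef)
    (hQ1 : (1 - Q).PosSemidef) {t : ℝ} (ht : 0 < t) :
    resolventDivergence t (binary (Q * ρ).trace.re) (binary (Q * σ).trace.re) ≤
      resolventDivergence t (nussbaumSzkola hρ.1 hσ.1) (nussbaumSzkola hσ.1 hρ.1 ∘ Prod.swap) := by
  set p := (Q * ρ).trace.re
  set q := (Q * σ).trace.re
  -- with these weights both `tr(Tσ)` and the bound on `tr(T²(ρ + tσ))` equal the binary divergence
  set μ := q / (p + t * q)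
  set ν := (1 - q) / ((1 - p) + t * (1 - q))
  set T := μ • Q + ν • (1 - Q)
  set β := μ * q + ν * (1 - q)
  set F := resolventDivergence t (nussbaumSzkola hρ.1 hσ.1) (nussbaumSzkola hσ.1 hρ.1 ∘ Prod.swap)
  have hβ : resolventDivergence t (binary p) (binary q) = β := by
    simp only [resolventDivergence_binary, β, μ, ν, div_mul_eq_mul_div, sq]
  have hT : T.IsHermitian :=
    (hQ.1.smul (IsSelfAdjoint.all μ)).add (hQ1.1.smul (IsSelfAdjoint.all ν))
  have hM : (ρ + t • σ).PosSemidef := hρ.add (hσ.smul ht.le)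
  have hTσ : (T * σ).trace.re = β := by
    rw [re_trace_smul_add_smul_one_sub_mul, hσtr, Complex.one_re]
  have hTT : (T * T * (ρ + t • σ)).trace.re ≤ β := by
    have hQM : (Q * (ρ + t • σ)).trace.re = p + t * q := by
      simp [mul_add, trace_add, trace_smul, p, q]
    refine (re_trace_sq_mul_le hQ hQ1 hM μ ν).trans_eq ?_
    simp only [hQM, trace_add, trace_smul, hρtr, hσtr, Complex.add_re, Complex.smul_re,
      Complex.one_re, smul_eq_mul, mul_one]
    rw [show 1 + t - (p + t * q) = (1 - p) + t * (1 - q) by ring,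
      show μ ^ 2 * (p + t * q) = μ * q from div_sq_mul_self q _,
      show ν ^ 2 * ((1 - p) + t * (1 - q)) = ν * (1 - q) from div_sq_mul_self (1 - q) _]
  have hF : 0 ≤ F := sum_nonneg fun k _ => div_nonneg (sq_nonneg _) <|
    add_nonneg (nussbaumSzkola_nonneg hρ hσ.1 k) (mul_nonneg ht.le (nussbaumSzkola_nonneg hσ hρ.1 _))
  have hCS := sq_norm_trace_mul_le hρ hσ hT ht
  rw [hβ]
  have : β ^ 2 ≤ β * F := calc
    β ^ 2 ≤ ‖(T * σ).trace‖ ^ 2 := by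
      rw [← hTσ, ← sq_abs]
      exact pow_le_pow_left₀ (abs_nonneg _) (Complex.abs_re_le_norm _) 2
    _ ≤ (T * T * (ρ + t • σ)).trace.re * F := hCS
    _ ≤ β * F := mul_le_mul_of_nonneg_right hTT hF
  nlinarith

lemma isProbPair_binary_trace {ρ σ Q : Matrix n n ℂ} (hρ : ρ.PosSemidef) (hρtr : ρ.trace = 1)
    (hσ : σ.PosSemidef) (hσtr : σ.trace = 1) (hsupp : ∀ v : n → ℂ, σ *ᵥ v = 0 → ρ *ᵥ v = 0)
    (hQ : Q.PosSemidef) (hQ1 : (1 - Q).PosSemidef) :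
    IsProbPair (binary (Q * ρ).trace.re) (binary (Q * σ).trace.re) := by
  have hsub {M : Matrix n n ℂ} (hM : M.trace = 1) :
      ((1 - Q) * M).trace.re = 1 - (Q * M).trace.re := by
    simp [sub_mul, trace_sub, hM]
  refine isProbPair_binary (hQ.re_trace_mul_nonneg hρ) ?_ (hQ.re_trace_mul_nonneg hσ) ?_
    (re_trace_mul_eq_zero_of_ker_le hσ hsupp hQ) fun h => ?_
  · linarith [hQ1.re_trace_mul_nonneg hρ, hsub hρtr]
  · linarith [hQ1.re_trace_mul_nonneg hσ, hsub hσtr]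
  · have := re_trace_mul_eq_zero_of_ker_le hσ hsupp hQ1 (by rw [hsub hσtr, h, sub_self])
    linarith [hsub hρtr]

theorem relEntropy_binary_trace_le_nussbaumSzkola {ρ σ Q : Matrix n n ℂ} (hρ : ρ.PosSemidef)
    (hρtr : ρ.trace = 1) (hσ : σ.PosSemidef) (hσtr : σ.trace = 1)
    (hsupp : ∀ v : n → ℂ, σ *ᵥ v = 0 → ρ *ᵥ v = 0) (hQ : Q.PosSemidef)
    (hQ1 : (1 - Q).PosSemidef) :
    relEntropy (binary (Q * ρ).trace.re) (binary (Q * σ).trace.re) ≤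
      relEntropy (nussbaumSzkola hρ.1 hσ.1) (nussbaumSzkola hσ.1 hρ.1 ∘ Prod.swap) :=
  relEntropy_le_of_resolventDivergence_le (isProbPair_nussbaumSzkola hρ hρtr hσ hσtr hsupp)
    (isProbPair_binary_trace hρ hρtr hσ hσtr hsupp hQ hQ1) fun _ ht =>
      resolventDivergence_binary_trace_le hρ hρtr hσ hσtr hQ hQ1 ht

end Spectral

/-- For density operators with `supp(ρ) ⊆ supp(σ)` and `0 ≤ ε < 1`,
`D_h^ε(ρ‖σ) ≤ (S(ρ‖σ) + H_b(ε))/(1 − ε)` where `S(ρ‖σ) = tr[ρ(log₂ρ − log₂σ)]` is the quantum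
relative entropy in bits and `H_b` is the binary entropy. -/
theorem Dh_le_relEntropy {n : Type*} [Fintype n] [DecidableEq n]
    (ρ σ : Matrix n n ℂ) (hρ : ρ.PosSemidef) (hρtr : ρ.trace = 1)
    (hσ : σ.PosSemidef) (hσtr : σ.trace = 1)
    (hsupp : ∀ v : n → ℂ, σ.mulVec v = 0 → ρ.mulVec v = 0)
    (ε : ℝ) (hε0 : 0 ≤ ε) (hε1 : ε < 1) :
    let relEnt : ℝ := ((ρ * (matFun hρ.1 (Real.logb 2) - matFun hσ.1 (Real.logb 2))).trace).re
    let Hb : ℝ := -(ε * Real.logb 2 ε) - (1 - ε) * Real.logb 2 (1 - ε)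
    Dh ε ρ σ ≤ (relEnt + Hb) / (1 - ε) := by
  intro relEnt Hb
  have hdpi {Q : Matrix n n ℂ} (hQ : Q.PosSemidef) (hQ1 : (1 - Q).PosSemidef) :=
    (relEntropy_binary_trace_le_nussbaumSzkola hρ hρtr hσ hσtr hsupp hQ hQ1).trans_eq <|
      relEntropy_nussbaumSzkola hρ.1 hσ.1 (isProbPair_nussbaumSzkola hρ hρtr hσ hσtr hsupp).absCont
  -- Klein's inequality: data processing under the trivial measurement `Q = 1`
  have hS : 0 ≤ log 2 * relEnt := by
    simpa [relEntropy_binary, hρtr, hσtr] using hdpi PosSemidef.one (by simpa using PosSemidef.zero)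
  have hHb : Hb = binEntropy ε / log 2 := by
    simp only [Hb, binEntropy, logb, log_inv]
    ring
  refine csSup_le ⟨0, 1, PosSemidef.one, by simpa using PosSemidef.zero, by simp [hρtr]; linarith,
    by simp [hσtr]⟩ ?_
  rintro _ ⟨Q, hQ, hQ1, hp, rfl⟩
  have key := neg_log_le_of_relEntropy_binary_le hS
    (isProbPair_binary_trace hρ hρtr hσ hσtr hsupp hQ hQ1) hp hε0 hε1 (hdpi hQ hQ1)
  rw [logb, one_div, log_inv, hHb, div_le_iff₀ (log_pos one_lt_two)]
  exact key.trans_eq (by field_simp)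
end
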